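/- arXiv:1602.02923 — 7 statements merged into one kernel-verified Lean document; each statement's English description precedes it below -/
import Mathlib

section
/- Let D be a nonempty subset of ℝ^N, let K ≥ 1, and for each k ∈ Fin K let f_k : ℝ^N → ℝ and g_k : ℝ^N → ℝ be functions with g_k(x) > 0 for all x ∈ D. Fix x* ∈ D and set λ* = min_{k ∈ Fin K} f_k(x*)/g_k(x*). Then x* is a maximizer over D of the generalized fractional objective x ↦ min_k f_k(x)/g_k(x) if and only if x* is a maximizer over D of the parametric objective x ↦ min_k (f_k(x) − λ*·g_k(x)); moreover, in that case the maximum value of the parametric objective over D equals 0, i.e., min_k (f_k(x*) − λ*·g_k(x*)) = 0. -/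
/-!
Since every `g k x` is positive, `f k x / g k x ≤ c ↔ f k x - c * g k x ≤ 0`, and likewise with `≥`;
taking the minimum over `k` preserves both equivalences. With `c = λ*` the first one turns the
fractional optimality of `x*` into `min_k (f k x - λ* g k x) ≤ 0` on `D`, and both together show
that the parametric objective vanishes at `x*`.
-/

/-- Minimum of a real-valued function over the nonempty finite index set `Fin K`. -/
noncomputable def finMin {K : ℕ} (hK : 1 ≤ K) (h : Fin K → ℝ) : ℝ :=
  Finset.univ.inf' (Finset.univ_nonempty_iff.mpr (Fin.pos_iff_nonempty.mp hK)) h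

section FinMin

variable {K : ℕ} (hK : 1 ≤ K)

theorem finMin_le_iff (h : Fin K → ℝ) (c : ℝ) : finMin hK h ≤ c ↔ ∃ k, h k ≤ c := by
  simp [finMin, Finset.inf'_le_iff]

theorem le_finMin_iff (h : Fin K → ℝ) (c : ℝ) : c ≤ finMin hK h ↔ ∀ k, c ≤ h k := by
  simp [finMin, Finset.le_inf'_iff]

variable {f g : Fin K → ℝ} (hg : ∀ k, 0 < g k)
include hg

theorem finMin_div_le_iff (c : ℝ) :
    finMin hK (fun k => f k / g k) ≤ c ↔ finMin hK (fun k => f k - c * g k) ≤ 0 := by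
  simp only [finMin_le_iff, div_le_iff₀ (hg _), sub_nonpos]

theorem le_finMin_div_iff (c : ℝ) :
    c ≤ finMin hK (fun k => f k / g k) ↔ 0 ≤ finMin hK (fun k => f k - c * g k) := by
  simp only [le_finMin_iff, le_div_iff₀ (hg _), sub_nonneg]

theorem finMin_sub_finMin_div_mul_eq_zero :
    finMin hK (fun k => f k - finMin hK (fun k => f k / g k) * g k) = 0 :=
  le_antisymm ((finMin_div_le_iff hK hg _).1 le_rfl) ((le_finMin_div_iff hK hg _).1 le_rfl)

end FinMin

theorem jagannathan_dinkelbach_general {N K : ℕ} (hK : 1 ≤ K)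
    (D : Set (Fin N → ℝ))
    (f g : Fin K → (Fin N → ℝ) → ℝ)
    (hg : ∀ k, ∀ x ∈ D, 0 < g k x)
    (xstar : Fin N → ℝ) (hxstar : xstar ∈ D)
    (lam : ℝ) (hlam : lam = finMin hK (fun k => f k xstar / g k xstar)) :
    ((∀ x ∈ D, finMin hK (fun k => f k x / g k x) ≤
        finMin hK (fun k => f k xstar / g k xstar)) ↔
      (∀ x ∈ D, finMin hK (fun k => f k x - lam * g k x) ≤
        finMin hK (fun k => f k xstar - lam * g k xstar))) ∧
    ((∀ x ∈ D, finMin hK (fun k => f k x / g k x) ≤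
        finMin hK (fun k => f k xstar / g k xstar)) →
      finMin hK (fun k => f k xstar - lam * g k xstar) = 0) := by
  have hzero : finMin hK (fun k => f k xstar - lam * g k xstar) = 0 := by
    subst hlam
    exact finMin_sub_finMin_div_mul_eq_zero hK (hg · xstar hxstar)
  rw [hzero, ← hlam]
  exact ⟨forall₂_congr fun x hx => finMin_div_le_iff hK (hg · x hx) lam, fun _ => rfl⟩

/-- Jagannathan–Dinkelbach equivalence for generalized fractional programs
(Proposition 1 of the paper). -/
theorem jagannathan_dinkelbach {N K : ℕ} (hK : 1 ≤ K)
    (D : Set (Fin N → ℝ)) (hD : D.Nonempty)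
    (f g : Fin K → (Fin N → ℝ) → ℝ)
    (hg : ∀ k, ∀ x ∈ D, 0 < g k x)
    (xstar : Fin N → ℝ) (hxstar : xstar ∈ D)
    (lam : ℝ) (hlam : lam = finMin hK (fun k => f k xstar / g k xstar)) :
    ((∀ x ∈ D, finMin hK (fun k => f k x / g k x) ≤
        finMin hK (fun k => f k xstar / g k xstar)) ↔
      (∀ x ∈ D, finMin hK (fun k => f k x - lam * g k x) ≤
        finMin hK (fun k => f k xstar - lam * g k xstar))) ∧
    ((∀ x ∈ D, finMin hK (fun k => f k x / g k x) ≤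
        finMin hK (fun k => f k xstar / g k xstar)) →
      finMin hK (fun k => f k xstar - lam * g k xstar) = 0) :=
  jagannathan_dinkelbach_general hK D f g hg xstar hxstar lam hlam
end

section
/- Let D ⊆ ℝ^N be nonempty and compact, let K ≥ 1, and for each k ∈ Fin K let f_k : ℝ^N → ℝ and g_k : ℝ^N → ℝ be continuous functions with g_k(x) > 0 for all x ∈ D. Define the auxiliary function F : ℝ → ℝ by F(λ) = sup_{x ∈ D} min_{k ∈ Fin K} (f_k(x) − λ·g_k(x)), and let λ* = sup_{x ∈ D} min_{k ∈ Fin K} f_k(x)/g_k(x). Then F is strictly decreasing (strictly antitone) on ℝ, F(λ*) = 0, and λ* is the unique real number λ satisfying F(λ) = 0. -/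
lemma finMin_le {K : ℕ} (hK : 1 ≤ K) (h : Fin K → ℝ) (k : Fin K) :
    finMin hK h ≤ h k := Finset.inf'_le _ (Finset.mem_univ k)

lemma le_finMin {K : ℕ} (hK : 1 ≤ K) (h : Fin K → ℝ) (c : ℝ) (hc : ∀ k, c ≤ h k) :
    c ≤ finMin hK h := Finset.le_inf' _ _ fun k _ => hc k

lemma finMin_exists {K : ℕ} (hK : 1 ≤ K) (h : Fin K → ℝ) :
    ∃ k, finMin hK h = h k := by
  obtain ⟨k, _, hk⟩ := Finset.exists_mem_eq_inf'
    (Finset.univ_nonempty_iff.mpr (Fin.pos_iff_nonempty.mp hK)) h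
  exact ⟨k, hk⟩

lemma finMin_lt_finMin {K : ℕ} (hK : 1 ≤ K) (a b : Fin K → ℝ) (hab : ∀ k, a k < b k) :
    finMin hK a < finMin hK b := by
  obtain ⟨k, hk⟩ := finMin_exists hK b
  exact lt_of_le_of_lt (finMin_le hK a k) (hk ▸ hab k)

/-- Sup over a compact set is attained and equals the value at the max point. -/
lemma sSup_image_eq_max {N : ℕ} (D : Set (Fin N → ℝ)) (hD : D.Nonempty) (hDc : IsCompact D)
    (φ : (Fin N → ℝ) → ℝ) (hφ : ContinuousOn φ D) :
    ∃ x ∈ D, sSup (φ '' D) = φ x ∧ ∀ y ∈ D, φ y ≤ φ x := by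
  obtain ⟨x, hxD, hx⟩ := hDc.exists_isMaxOn hD hφ
  refine ⟨x, hxD, ?_, fun y hy => hx hy⟩
  apply le_antisymm
  · exact csSup_le (hD.image φ) (by rintro _ ⟨y, hy, rfl⟩; exact hx hy)
  · exact le_csSup ⟨φ x, by rintro _ ⟨y, hy, rfl⟩; exact hx hy⟩ ⟨x, hxD, rfl⟩

/-- Dinkelbach's auxiliary-function characterization (Proposition 1 of the paper):
the auxiliary function `F(λ) = max_{x ∈ D} min_k (f_k(x) − λ g_k(x))` is strictly
decreasing, vanishes at `λ* = max_{x ∈ D} min_k f_k(x)/g_k(x)`, and `λ*` is its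
unique zero. -/
theorem dinkelbach_auxiliary_function {N K : ℕ} (hK : 1 ≤ K)
    (D : Set (Fin N → ℝ)) (hD : D.Nonempty) (hDc : IsCompact D)
    (f g : Fin K → (Fin N → ℝ) → ℝ)
    (hf : ∀ k, Continuous (f k)) (hgc : ∀ k, Continuous (g k))
    (hg : ∀ k, ∀ x ∈ D, 0 < g k x)
    (F : ℝ → ℝ)
    (hF : ∀ lam, F lam =
      sSup ((fun x => finMin hK (fun k => f k x - lam * g k x)) '' D))
    (lamstar : ℝ)
    (hlamstar : lamstar = sSup ((fun x => finMin hK (fun k => f k x / g k x)) '' D)) :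
    StrictAnti F ∧ F lamstar = 0 ∧ ∀ lam : ℝ, F lam = 0 → lam = lamstar := by
  have hne : (Finset.univ : Finset (Fin K)).Nonempty :=
    Finset.univ_nonempty_iff.mpr (Fin.pos_iff_nonempty.mp hK)
  have hcont : ∀ lam : ℝ, ContinuousOn (fun x => finMin hK (fun k => f k x - lam * g k x)) D :=
    fun lam => ContinuousOn.finset_inf'_apply hne fun k _ =>
      ((hf k).sub (continuous_const.mul (hgc k))).continuousOn
  have hSA : StrictAnti F := by
    intro a b hab
    obtain ⟨x, hxD, hxeq, hxmax⟩ := sSup_image_eq_max D hD hDc _ (hcont a)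
    obtain ⟨y, hyD, hyeq, _⟩ := sSup_image_eq_max D hD hDc _ (hcont b)
    rw [hF a, hF b, hxeq, hyeq]
    calc finMin hK (fun k => f k y - b * g k y)
        < finMin hK (fun k => f k y - a * g k y) := by
          apply finMin_lt_finMin
          intro k
          have := hg k y hyD
          nlinarith
      _ ≤ finMin hK (fun k => f k x - a * g k x) := hxmax y hyD
  have hFz : F lamstar = 0 := by
    have hcontq : ContinuousOn (fun x => finMin hK (fun k => f k x / g k x)) D :=
      ContinuousOn.finset_inf'_apply hne fun k _ =>
        (hf k).continuousOn.div (hgc k).continuousOn fun x hx => (hg k x hx).ne'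
    obtain ⟨x, hxD, hxeq, hxmax⟩ := sSup_image_eq_max D hD hDc _ hcontq
    have hlx : lamstar = finMin hK (fun k => f k x / g k x) := hlamstar.trans hxeq
    obtain ⟨z, hzD, hzeq, hzmax⟩ := sSup_image_eq_max D hD hDc _ (hcont lamstar)
    rw [hF lamstar, hzeq]
    apply le_antisymm
    · -- each value in D is ≤ 0
      obtain ⟨k, hk⟩ := finMin_exists hK (fun k => f k z / g k z)
      have h1 : f k z / g k z ≤ lamstar := by
        rw [hlx]
        calc f k z / g k z = finMin hK (fun k => f k z / g k z) := hk.symm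
          _ ≤ _ := hxmax z hzD
      have hgz := hg k z hzD
      have h2 : f k z - lamstar * g k z ≤ 0 := by
        rw [div_le_iff₀ hgz] at h1; nlinarith
      exact le_trans (finMin_le hK _ k) h2
    · -- value at x is ≥ 0
      refine le_trans ?_ (hzmax x hxD)
      apply le_finMin
      intro k
      have hgx := hg k x hxD
      have h1 : lamstar ≤ f k x / g k x := hlx ▸ finMin_le hK _ k
      rw [le_div_iff₀ hgx] at h1
      nlinarith
  exact ⟨hSA, hFz, fun lam h => hSA.injective (h.trans hFz.symm)⟩
end

section
/- Let K ≥ 1, let p_max ∈ ℝ^K with p_max ≥ 0, and let q⁺, q⁻, c⁺, c⁻ : ℝ^K → ℝ with q⁻ and c⁻ monotone nondecreasing with respect to the componentwise order. Define the feasible set P = {p ∈ ℝ^K : 0 ≤ p ≤ p_max and c⁺(p) − c⁻(p) ≥ 0} and the lifted feasible set F = {(t,s,p) ∈ ℝ × ℝ × ℝ^K : 0 ≤ p ≤ p_max, t ≥ 0, t + q⁻(p) ≤ q⁻(p_max), s ≥ 0, s + c⁻(p) ≤ c⁻(p_max), and s + c⁺(p) ≥ c⁻(p_max)}. Then a point p*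 ∈ P maximizes p ↦ q⁺(p) − q⁻(p) over P if and only if the point (t*, s*, p*) with t* = q⁻(p_max) − q⁻(p*) and s* = c⁻(p_max) − c⁻(p*) maximizes (t,s,p) ↦ q⁺(p) + t over F; moreover, in that case the optimal value of the lifted problem equals the optimal value of the original problem plus the constant q⁻(p_max). -/
/-! On the lifted set, `t + q⁻(p) ≤ q⁻(pmax)` bounds the lifted objective by
`q⁺(p) − q⁻(p) + q⁻(pmax)`, and `s + c⁻(p) ≤ c⁻(pmax) ≤ s + c⁺(p)` forces
`c⁻(p) ≤ c⁺(p)`, so projecting to `p` lands in `P`. Conversely, monotonicity of `q⁻` and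
`c⁻` makes the lift of `p ∈ P` with maximal slacks feasible, and it attains that bound.
Hence maximizers correspond. -/

def IsMaximizerOn {α : Type*} (h : α → ℝ) (D : Set α) (x : α) : Prop :=
  x ∈ D ∧ ∀ y ∈ D, h y ≤ h x

open Set

theorem isMaximizerOn_iff_of_lift {α β : Type*} {f : α → ℝ} {g : β → ℝ} {D : Set α}
    {E : Set β} (π : β → α) (ι : α → β) (c : ℝ) (hπ : MapsTo π E D) (hι : MapsTo ι D E)
    (hg_le : ∀ y ∈ E, g y ≤ f (π y) + c) (hg_lift : ∀ x ∈ D, g (ι x) = f x + c)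
    {x : α} (hx : x ∈ D) :
    IsMaximizerOn f D x ↔ IsMaximizerOn g E (ι x) := by
  constructor
  · rintro ⟨-, hmax⟩
    refine ⟨hι hx, fun y hy => ?_⟩
    calc g y ≤ f (π y) + c := hg_le y hy
      _ ≤ f x + c := by gcongr; exact hmax _ (hπ hy)
      _ = g (ι x) := (hg_lift x hx).symm
  · rintro ⟨-, hmax⟩
    refine ⟨hx, fun y hy => ?_⟩
    have := hmax _ (hι hy)
    rw [hg_lift y hy, hg_lift x hx] at this
    linarith

section Lifting

variable {α : Type*} [Preorder α] [Zero α] (pmax : α) (qm cp cm : α → ℝ)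

def feasibleSet : Set α :=
  {p | 0 ≤ p ∧ p ≤ pmax ∧ 0 ≤ cp p - cm p}

def liftedFeasibleSet : Set (ℝ × ℝ × α) :=
  {x | 0 ≤ x.2.2 ∧ x.2.2 ≤ pmax ∧ 0 ≤ x.1 ∧ x.1 + qm x.2.2 ≤ qm pmax ∧
    0 ≤ x.2.1 ∧ x.2.1 + cm x.2.2 ≤ cm pmax ∧ cm pmax ≤ x.2.1 + cp x.2.2}

/-- The canonical lift takes the slacks `t, s` as large as the constraints allow. -/
def canonicalLift (p : α) : ℝ × ℝ × α :=
  (qm pmax - qm p, cm pmax - cm p, p)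

variable {pmax qm cp cm}

theorem mapsTo_canonicalLift (hqm : Monotone qm) (hcm : Monotone cm) :
    MapsTo (canonicalLift pmax qm cm) (feasibleSet pmax cp cm)
      (liftedFeasibleSet pmax qm cp cm) := by
  rintro p ⟨hp0, hp, hcp⟩
  have hq : qm p ≤ qm pmax := hqm hp
  have hc : cm p ≤ cm pmax := hcm hp
  refine ⟨hp0, hp, ?_⟩
  simp only [canonicalLift]
  refine ⟨?_, ?_, ?_, ?_, ?_⟩ <;> linarith

theorem mapsTo_snd_snd_liftedFeasibleSet :
    MapsTo (fun x : ℝ × ℝ × α => x.2.2) (liftedFeasibleSet pmax qm cp cm)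
      (feasibleSet pmax cp cm) :=
  fun _ ⟨hp0, hp, _, _, _, hs, hs'⟩ => ⟨hp0, hp, by linarith⟩

end Lifting

theorem gee_monotonic_lifting_general {K : ℕ}
    (pmax : Fin K → ℝ)
    (qp qm cp cm : (Fin K → ℝ) → ℝ)
    (hqm : Monotone qm) (hcm : Monotone cm)
    (pstar : Fin K → ℝ)
    (hpstar : pstar ∈ {p : Fin K → ℝ | 0 ≤ p ∧ p ≤ pmax ∧ 0 ≤ cp p - cm p}) :
    (IsMaximizerOn (fun p => qp p - qm p)
        {p : Fin K → ℝ | 0 ≤ p ∧ p ≤ pmax ∧ 0 ≤ cp p - cm p} pstar ↔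
      IsMaximizerOn (fun x : ℝ × ℝ × (Fin K → ℝ) => qp x.2.2 + x.1)
        {x : ℝ × ℝ × (Fin K → ℝ) |
          0 ≤ x.2.2 ∧ x.2.2 ≤ pmax ∧ 0 ≤ x.1 ∧ x.1 + qm x.2.2 ≤ qm pmax ∧
          0 ≤ x.2.1 ∧ x.2.1 + cm x.2.2 ≤ cm pmax ∧ cm pmax ≤ x.2.1 + cp x.2.2}
        (qm pmax - qm pstar, cm pmax - cm pstar, pstar)) ∧
    (IsMaximizerOn (fun p => qp p - qm p)
        {p : Fin K → ℝ | 0 ≤ p ∧ p ≤ pmax ∧ 0 ≤ cp p - cm p} pstar →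
      qp pstar + (qm pmax - qm pstar) = (qp pstar - qm pstar) + qm pmax) := by
  refine ⟨?_, fun _ => by ring⟩
  refine isMaximizerOn_iff_of_lift (D := feasibleSet pmax cp cm)
    (E := liftedFeasibleSet pmax qm cp cm) (fun x => x.2.2) (canonicalLift pmax qm cm) (qm pmax)
    mapsTo_snd_snd_liftedFeasibleSet (mapsTo_canonicalLift hqm hcm) ?_ ?_ hpstar
  · rintro ⟨t, s, p⟩ ⟨-, -, -, ht, -⟩
    dsimp only at ht ⊢
    linarith
  · intro p _
    simp only [canonicalLift]
    ring

/-- The lifting underlying Proposition 4 of the paper: maximizing a difference of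
increasing functions under a difference-of-increasing constraint is equivalent,
via the auxiliary variables `t` and `s`, to maximizing an increasing objective
over the lifted feasible set. -/
theorem gee_monotonic_lifting {K : ℕ} (hK : 1 ≤ K)
    (pmax : Fin K → ℝ) (hpmax : 0 ≤ pmax)
    (qp qm cp cm : (Fin K → ℝ) → ℝ)
    (hqm : Monotone qm) (hcm : Monotone cm)
    (pstar : Fin K → ℝ)
    (hpstar : pstar ∈ {p : Fin K → ℝ | 0 ≤ p ∧ p ≤ pmax ∧ 0 ≤ cp p - cm p}) :
    (IsMaximizerOn (fun p => qp p - qm p)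
        {p : Fin K → ℝ | 0 ≤ p ∧ p ≤ pmax ∧ 0 ≤ cp p - cm p} pstar ↔
      IsMaximizerOn (fun x : ℝ × ℝ × (Fin K → ℝ) => qp x.2.2 + x.1)
        {x : ℝ × ℝ × (Fin K → ℝ) |
          0 ≤ x.2.2 ∧ x.2.2 ≤ pmax ∧ 0 ≤ x.1 ∧ x.1 + qm x.2.2 ≤ qm pmax ∧
          0 ≤ x.2.1 ∧ x.2.1 + cm x.2.2 ≤ cm pmax ∧ cm pmax ≤ x.2.1 + cp x.2.2}
        (qm pmax - qm pstar, cm pmax - cm pstar, pstar)) ∧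
    (IsMaximizerOn (fun p => qp p - qm p)
        {p : Fin K → ℝ | 0 ≤ p ∧ p ≤ pmax ∧ 0 ≤ cp p - cm p} pstar →
      qp pstar + (qm pmax - qm pstar) = (qp pstar - qm pstar) + qm pmax) :=
  gee_monotonic_lifting_general pmax qp qm cp cm hqm hcm pstar hpstar
end

section
/- Let K ≥ 1, let p_max ∈ ℝ^K with p_max ≥ 0, and let q⁺, q⁻, c⁺, c⁻ : ℝ^K → ℝ with q⁻ and c⁻ monotone nondecreasing with respect to the componentwise order. Define P = {p ∈ ℝ^K : 0 ≤ p ≤ p_max and c⁺(p) − c⁻(p) ≥ 0} and F = {(t,s,p) ∈ ℝ × ℝ × ℝ^K : 0 ≤ p ≤ p_max, t ≥ 0, t + q⁻(p) ≤ q⁻(p_max), s ≥ 0, s + c⁻(p) ≤ c⁻(p_max), and s + c⁺(p) ≥ c⁻(p_max)}. Assume P is nonempty and the image {q⁺(p) − q⁻(p) : p ∈ P} is bounded above. Then F is nonempty, the image {q⁺(p) + t : (t,s,p) ∈ F} is bounded above, and sup_{(t,s,p) ∈ F} (q⁺(p) + t) = sup_{p ∈ P} (q⁺(p) − q⁻(p))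 + q⁻(p_max). -/
/-- Optimal-value form of the lifting underlying Proposition 4 of the paper. -/
theorem gee_monotonic_lifting_value {K : ℕ} (hK : 1 ≤ K)
    (pmax : Fin K → ℝ) (hpmax : 0 ≤ pmax)
    (qp qm cp cm : (Fin K → ℝ) → ℝ)
    (hqm : Monotone qm) (hcm : Monotone cm)
    (hPne : ({p : Fin K → ℝ | 0 ≤ p ∧ p ≤ pmax ∧ 0 ≤ cp p - cm p}).Nonempty)
    (hbdd : BddAbove ((fun p => qp p - qm p) ''
      {p : Fin K → ℝ | 0 ≤ p ∧ p ≤ pmax ∧ 0 ≤ cp p - cm p})) :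
    ({x : ℝ × ℝ × (Fin K → ℝ) |
        0 ≤ x.2.2 ∧ x.2.2 ≤ pmax ∧ 0 ≤ x.1 ∧ x.1 + qm x.2.2 ≤ qm pmax ∧
        0 ≤ x.2.1 ∧ x.2.1 + cm x.2.2 ≤ cm pmax ∧ cm pmax ≤ x.2.1 + cp x.2.2}).Nonempty ∧
    BddAbove ((fun x : ℝ × ℝ × (Fin K → ℝ) => qp x.2.2 + x.1) ''
      {x : ℝ × ℝ × (Fin K → ℝ) |
        0 ≤ x.2.2 ∧ x.2.2 ≤ pmax ∧ 0 ≤ x.1 ∧ x.1 + qm x.2.2 ≤ qm pmax ∧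
        0 ≤ x.2.1 ∧ x.2.1 + cm x.2.2 ≤ cm pmax ∧ cm pmax ≤ x.2.1 + cp x.2.2}) ∧
    sSup ((fun x : ℝ × ℝ × (Fin K → ℝ) => qp x.2.2 + x.1) ''
      {x : ℝ × ℝ × (Fin K → ℝ) |
        0 ≤ x.2.2 ∧ x.2.2 ≤ pmax ∧ 0 ≤ x.1 ∧ x.1 + qm x.2.2 ≤ qm pmax ∧
        0 ≤ x.2.1 ∧ x.2.1 + cm x.2.2 ≤ cm pmax ∧ cm pmax ≤ x.2.1 + cp x.2.2}) =
      sSup ((fun p => qp p - qm p) ''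
        {p : Fin K → ℝ | 0 ≤ p ∧ p ≤ pmax ∧ 0 ≤ cp p - cm p}) + qm pmax := by
  set P : Set (Fin K → ℝ) := {p : Fin K → ℝ | 0 ≤ p ∧ p ≤ pmax ∧ 0 ≤ cp p - cm p} with hP
  set F : Set (ℝ × ℝ × (Fin K → ℝ)) := {x : ℝ × ℝ × (Fin K → ℝ) |
        0 ≤ x.2.2 ∧ x.2.2 ≤ pmax ∧ 0 ≤ x.1 ∧ x.1 + qm x.2.2 ≤ qm pmax ∧
        0 ≤ x.2.1 ∧ x.2.1 + cm x.2.2 ≤ cm pmax ∧ cm pmax ≤ x.2.1 + cp x.2.2} with hF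
  -- lifting map
  have lift : ∀ p ∈ P, (qm pmax - qm p, cm pmax - cm p, p) ∈ F := by
    rintro p ⟨h0, h1, h2⟩
    refine ⟨h0, h1, ?_, by dsimp only; ring_nf; rfl, ?_, by dsimp only; ring_nf; rfl,
      by dsimp only; linarith⟩
    · exact sub_nonneg.mpr (hqm h1)
    · exact sub_nonneg.mpr (hcm h1)
  obtain ⟨p0, hp0⟩ := hPne
  have hFne : F.Nonempty := ⟨_, lift p0 hp0⟩
  -- projection: every F point gives a P point with value bound
  have proj : ∀ x ∈ F, x.2.2 ∈ P ∧ qp x.2.2 + x.1 ≤ (qp x.2.2 - qm x.2.2) + qm pmax := by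
    rintro x ⟨h0, h1, h2, h3, h4, h5, h6⟩
    exact ⟨⟨h0, h1, by linarith⟩, by linarith⟩
  have hbddF : BddAbove ((fun x : ℝ × ℝ × (Fin K → ℝ) => qp x.2.2 + x.1) '' F) := by
    refine ⟨sSup ((fun p => qp p - qm p) '' P) + qm pmax, ?_⟩
    rintro v ⟨x, hx, rfl⟩
    obtain ⟨hxP, hxle⟩ := proj x hx
    have := le_csSup hbdd ⟨x.2.2, hxP, rfl⟩
    dsimp only at this ⊢
    linarith
  refine ⟨hFne, hbddF, le_antisymm ?_ ?_⟩
  · apply csSup_le (hFne.image _)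
    rintro v ⟨x, hx, rfl⟩
    obtain ⟨hxP, hxle⟩ := proj x hx
    have := le_csSup hbdd ⟨x.2.2, hxP, rfl⟩
    dsimp only at this ⊢
    linarith
  · rw [← le_sub_iff_add_le]
    apply csSup_le ((Set.nonempty_of_mem hp0).image _)
    rintro v ⟨p, hp, rfl⟩
    have := le_csSup hbddF ⟨_, lift p hp, rfl⟩
    dsimp only at this ⊢
    linarith
end

section
/- Let K ≥ 1, let p_max ∈ ℝ^K with p_max ≥ 0, and let P ⊆ {p ∈ ℝ^K : 0 ≤ p ≤ p_max}. For each k ∈ Fin K let q_k⁺ : ℝ^K → ℝ be arbitrary and ν_k : ℝ^K → ℝ be monotone nondecreasing with respect to the componentwise order. Then p* ∈ P maximizes p ↦ min_{k ∈ Fin K} (q_k⁺(p) − ν_k(p)) over P if and only if the pair (t*, p*) with t* = Σ_{i ∈ Fin K} ν_i(p_max) − Σ_{i ∈ Fin K} ν_i(p*) maximizes (t,p) ↦ min_{k ∈ Fin K} (q_k⁺(p) + Σ_{i ≠ k} ν_i(p)) + t over the lifted set {(t,p) ∈ ℝ × ℝ^K : p ∈ P, t ≥ 0, and t + Σ_{i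 ∈ Fin K} ν_i(p) ≤ Σ_{i ∈ Fin K} ν_i(p_max)}; moreover, in that case the optimal value of the lifted problem equals the optimal value of the original problem plus the constant Σ_{i ∈ Fin K} ν_i(p_max). -/
/-
Since `∑_{i ≠ k} ν_i = ∑_i ν_i - ν_k`, the lifted objective at `(t, p)` is the original objective
at `p` plus `∑_i ν_i(p) + t`. On the lifted set this surplus is at most `∑_i ν_i(p_max)`, with
equality exactly when the slack `t` is as large as allowed; the bound is attainable at every
`p ∈ P` because the `ν_i` are monotone and `p ≤ p_max`.
-/

lemma finMin_add_const {K : ℕ} (hK : 1 ≤ K) (g : Fin K → ℝ) (c : ℝ) :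
    finMin hK (fun k => g k + c) = finMin hK g + c :=
  (map_finset_inf' (OrderIso.addRight c) _ g).symm

lemma finMin_add_sum_erase {K : ℕ} (hK : 1 ≤ K) (a b : Fin K → ℝ) :
    finMin hK (fun k => a k + ∑ i ∈ Finset.univ.erase k, b i) =
      finMin hK (fun k => a k - b k) + ∑ i, b i := by
  rw [← finMin_add_const]
  congr 1
  funext k
  rw [Finset.sum_erase_eq_sub (Finset.mem_univ k)]
  ring

lemma isMaximizerOn_iff_slack_lift {α : Type*} (f S : α → ℝ) (P : Set α) (c : ℝ)
    (hS : ∀ p ∈ P, S p ≤ c) (x : α) :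
    IsMaximizerOn f P x ↔
      IsMaximizerOn (fun y : ℝ × α => f y.2 + S y.2 + y.1)
        {y : ℝ × α | y.2 ∈ P ∧ 0 ≤ y.1 ∧ y.1 + S y.2 ≤ c} (c - S x, x) := by
  have lift_mem : ∀ p ∈ P, (c - S p, p) ∈ {y : ℝ × α | y.2 ∈ P ∧ 0 ≤ y.1 ∧ y.1 + S y.2 ≤ c} :=
    fun p hp => ⟨hp, sub_nonneg.mpr (hS p hp), by simp⟩
  constructor
  · rintro ⟨hx, hmax⟩
    refine ⟨lift_mem x hx, ?_⟩
    rintro ⟨t, p⟩ ⟨hp, -, hslack⟩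
    have := hmax p hp
    simp only at hslack ⊢
    linarith
  · rintro ⟨⟨hx, -⟩, hmax⟩
    refine ⟨hx, fun p hp => ?_⟩
    have := hmax _ (lift_mem p hp)
    simp only at this
    linarith

theorem wmee_monotonic_lifting_general {K : ℕ} (hK : 1 ≤ K)
    (pmax : Fin K → ℝ)
    (P : Set (Fin K → ℝ)) (hP : P ⊆ {p : Fin K → ℝ | 0 ≤ p ∧ p ≤ pmax})
    (qp ν : Fin K → (Fin K → ℝ) → ℝ)
    (hν : ∀ k, Monotone (ν k))
    (pstar : Fin K → ℝ) :
    (IsMaximizerOn (fun p => finMin hK (fun k => qp k p - ν k p)) P pstar ↔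
      IsMaximizerOn
        (fun x : ℝ × (Fin K → ℝ) =>
          finMin hK (fun k => qp k x.2 + ∑ i ∈ Finset.univ.erase k, ν i x.2) + x.1)
        {x : ℝ × (Fin K → ℝ) | x.2 ∈ P ∧ 0 ≤ x.1 ∧
          x.1 + ∑ i : Fin K, ν i x.2 ≤ ∑ i : Fin K, ν i pmax}
        (∑ i : Fin K, ν i pmax - ∑ i : Fin K, ν i pstar, pstar)) ∧
    (IsMaximizerOn (fun p => finMin hK (fun k => qp k p - ν k p)) P pstar →
      finMin hK (fun k => qp k pstar + ∑ i ∈ Finset.univ.erase k, ν i pstar) +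
          (∑ i : Fin K, ν i pmax - ∑ i : Fin K, ν i pstar) =
        finMin hK (fun k => qp k pstar - ν k pstar) + ∑ i : Fin K, ν i pmax) := by
  have sum_le_sum_pmax : ∀ p ∈ P, ∑ i, ν i p ≤ ∑ i, ν i pmax :=
    fun p hp => Finset.sum_le_sum fun i _ => hν i (hP hp).2
  simp only [finMin_add_sum_erase hK (fun k => qp k _) (fun i => ν i _)]
  refine ⟨isMaximizerOn_iff_slack_lift _ (fun p => ∑ i, ν i p) P _ sum_le_sum_pmax pstar,
    fun _ => by ring⟩

/-- The lifting underlying Proposition 5 of the paper: the Dinkelbach auxiliary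
problem for WMEE maximization as a monotonic problem. -/
theorem wmee_monotonic_lifting {K : ℕ} (hK : 1 ≤ K)
    (pmax : Fin K → ℝ) (hpmax : 0 ≤ pmax)
    (P : Set (Fin K → ℝ)) (hP : P ⊆ {p : Fin K → ℝ | 0 ≤ p ∧ p ≤ pmax})
    (qp ν : Fin K → (Fin K → ℝ) → ℝ)
    (hν : ∀ k, Monotone (ν k))
    (pstar : Fin K → ℝ) (hpstar : pstar ∈ P) :
    (IsMaximizerOn (fun p => finMin hK (fun k => qp k p - ν k p)) P pstar ↔
      IsMaximizerOn
        (fun x : ℝ × (Fin K → ℝ) =>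
          finMin hK (fun k => qp k x.2 + ∑ i ∈ Finset.univ.erase k, ν i x.2) + x.1)
        {x : ℝ × (Fin K → ℝ) | x.2 ∈ P ∧ 0 ≤ x.1 ∧
          x.1 + ∑ i : Fin K, ν i x.2 ≤ ∑ i : Fin K, ν i pmax}
        (∑ i : Fin K, ν i pmax - ∑ i : Fin K, ν i pstar, pstar)) ∧
    (IsMaximizerOn (fun p => finMin hK (fun k => qp k p - ν k p)) P pstar →
      finMin hK (fun k => qp k pstar + ∑ i ∈ Finset.univ.erase k, ν i pstar) +
          (∑ i : Fin K, ν i pmax - ∑ i : Fin K, ν i pstar) =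
        finMin hK (fun k => qp k pstar - ν k pstar) + ∑ i : Fin K, ν i pmax) :=
  wmee_monotonic_lifting_general hK pmax P hP qp ν hν pstar
end

section
/- Let K ≥ 1, let p_max ∈ ℝ^K with p_max ≥ 0, and for each k ∈ Fin K let q_k⁺ : ℝ^K → ℝ be continuous, q_k⁻ : ℝ^K → ℝ be concave and differentiable, c_k⁺ : ℝ^K → ℝ be arbitrary, c_k⁻ : ℝ^K → ℝ be concave and differentiable, and let μ_k ≥ 0 and Ψ_k ≥ 0 with Σ_k Ψ_k > 0. Define GEE(p) = (Σ_k (q_k⁺(p) − q_k⁻(p)))/(Σ_k (μ_k p_k + Ψ_k)). For each x ∈ ℝ^K define the linearized feasible set D(x) = {p : 0 ≤ p ≤ p_max and for all k, c_k⁺(p) − (c_k⁻(x) + Dc_k⁻(x)(p − x)) ≥ 0} and the approximate objective G_x(p) = (Σ_k [q_k⁺(p) − (q_k⁻(x) + Dq_k⁻(x)(p − x))])/(Σ_k (μ_k p_k + Ψ_k)), where Dh(x) denotes the Fréchet derivative of h at x. Let (p_j)_{j ≥ 0} be a sequence in ℝ^K with 0 ≤ p_0 ≤ p_max and c_k⁺(p_0)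 − c_k⁻(p_0) ≥ 0 for all k, and such that for every j, p_{j+1} ∈ D(p_j) and p_{j+1} maximizes G_{p_j} over D(p_j). Then every p_j is feasible for the original problem (0 ≤ p_j ≤ p_max and c_k⁺(p_j) − c_k⁻(p_j) ≥ 0 for all k), the sequence (GEE(p_j))_j is monotone nondecreasing, and it converges to a finite limit. -/
/-!
Concavity puts `q⁻ₖ` and `c⁻ₖ` below their tangent planes. Hence the linearized set `D x` lies
inside the true feasible set, and `G x` minorizes `GEE` on nonnegative powers with equality at
`x`, so `GEE (p j) = G (p j) (p j) ≤ G (p j) (p (j + 1)) ≤ GEE (p (j + 1))`: a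
minorize–maximize scheme. The monotone sequence is bounded because `GEE` is continuous on the
compact box `[0, pmax]`.
-/

open Set Filter Topology

theorem ConcaveOn.le_add_of_hasFDerivAt {E : Type*} [NormedAddCommGroup E] [NormedSpace ℝ E]
    {s : Set E} {f : E → ℝ} {f' : E →L[ℝ] ℝ} {x y : E} (hf : ConcaveOn ℝ s f)
    (hx : x ∈ s) (hy : y ∈ s) (hf' : HasFDerivAt f f' x) : f y ≤ f x + f' (y - x) := by
  have hline : ConvexOn ℝ (AffineMap.lineMap x y ⁻¹' s)
      (fun t : ℝ => -f (AffineMap.lineMap x y t)) :=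
    hf.neg.comp_affineMap _
  have hderiv : HasDerivAt (fun t : ℝ => -f (AffineMap.lineMap x y t)) (-f' (y - x)) 0 := by
    rw [← AffineMap.lineMap_apply_zero x y (k := ℝ)] at hf'
    exact (hf'.comp_hasDerivAt 0 AffineMap.hasDerivAt_lineMap).neg
  have hslope := hline.le_slope_of_hasDerivAt (x := 0) (y := 1) (by simpa using hx)
    (by simpa using hy) one_pos hderiv
  simp only [slope_def_field, AffineMap.lineMap_apply_zero, AffineMap.lineMap_apply_one] at hslope
  linarith

theorem ConcaveOn.le_add_fderiv {E : Type*} [NormedAddCommGroup E] [NormedSpace ℝ E]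
    {f : E → ℝ} (hf : ConcaveOn ℝ univ f) (hdiff : Differentiable ℝ f) (x y : E) :
    f y ≤ f x + fderiv ℝ f x (y - x) :=
  hf.le_add_of_hasFDerivAt (mem_univ x) (mem_univ y) (hdiff x).hasFDerivAt

theorem sum_sub_linearization_le {ι E : Type*} [Fintype ι] [NormedAddCommGroup E]
    [NormedSpace ℝ E] {q r : ι → E → ℝ} (hconc : ∀ i, ConcaveOn ℝ univ (r i))
    (hdiff : ∀ i, Differentiable ℝ (r i)) (x y : E) :
    ∑ i, (q i y - (r i x + fderiv ℝ (r i) x (y - x))) ≤ ∑ i, (q i y - r i y) :=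
  Finset.sum_le_sum fun i _ => by
    linarith [(hconc i).le_add_fderiv (hdiff i) x y]

theorem sum_mul_add_pos {ι : Type*} [Fintype ι] {μ Ψ y : ι → ℝ} (hμ : ∀ i, 0 ≤ μ i)
    (hy : 0 ≤ y) (hΨ : 0 < ∑ i, Ψ i) : 0 < ∑ i, (μ i * y i + Ψ i) := by
  rw [Finset.sum_add_distrib]
  exact add_pos_of_nonneg_of_pos (Finset.sum_nonneg fun i _ => mul_nonneg (hμ i) (hy i)) hΨ

theorem monotone_comp_of_minorize_maximize {α β : Type*} [Preorder β] {F : α → β}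
    {G : α → α → β} {D : α → Set α} {p : ℕ → α}
    (htight : ∀ j, F (p j) ≤ G (p j) (p j)) (hminor : ∀ j, G (p j) (p (j + 1)) ≤ F (p (j + 1)))
    (hself : ∀ j, p j ∈ D (p j)) (hmax : ∀ j, ∀ y ∈ D (p j), G (p j) y ≤ G (p j) (p (j + 1))) :
    Monotone (F ∘ p) :=
  monotone_nat_of_le_succ fun j =>
    (htight j).trans <| ((hmax j) (p j) (hself j)).trans (hminor j)

theorem exists_tendsto_of_monotone_of_mem_compact {α : Type*} [TopologicalSpace α]
    {F : α → ℝ} {S : Set α} {p : ℕ → α} (hmono : Monotone (F ∘ p)) (hS : IsCompact S)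
    (hF : ContinuousOn F S) (hp : ∀ j, p j ∈ S) : ∃ L, Tendsto (F ∘ p) atTop (𝓝 L) :=
  ⟨_, tendsto_atTop_ciSup hmono <|
    (hS.image_of_continuousOn hF).bddAbove.mono
      (range_subset_iff.2 fun j => mem_image_of_mem F (hp j))⟩

theorem gee_sequential_fractional_programming_general {K : ℕ}
    (pmax : Fin K → ℝ)
    (qp qm cp cm : Fin K → (Fin K → ℝ) → ℝ)
    (hqpc : ∀ k, Continuous (qp k))
    (hqmconc : ∀ k, ConcaveOn ℝ Set.univ (qm k))
    (hqmdiff : ∀ k, Differentiable ℝ (qm k))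
    (hcmconc : ∀ k, ConcaveOn ℝ Set.univ (cm k))
    (hcmdiff : ∀ k, Differentiable ℝ (cm k))
    (μ Ψ : Fin K → ℝ) (hμ : ∀ k, 0 ≤ μ k)
    (hΨsum : 0 < ∑ k, Ψ k)
    (GEE : (Fin K → ℝ) → ℝ)
    (hGEE : ∀ p : Fin K → ℝ,
      GEE p = (∑ k, (qp k p - qm k p)) / (∑ k, (μ k * p k + Ψ k)))
    (D : (Fin K → ℝ) → Set (Fin K → ℝ))
    (hD : ∀ x : Fin K → ℝ, D x = {p : Fin K → ℝ | 0 ≤ p ∧ p ≤ pmax ∧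
      ∀ k, 0 ≤ cp k p - (cm k x + fderiv ℝ (cm k) x (p - x))})
    (G : (Fin K → ℝ) → (Fin K → ℝ) → ℝ)
    (hG : ∀ x p : Fin K → ℝ, G x p =
      (∑ k, (qp k p - (qm k x + fderiv ℝ (qm k) x (p - x)))) /
        (∑ k, (μ k * p k + Ψ k)))
    (p : ℕ → Fin K → ℝ)
    (hp0 : 0 ≤ p 0 ∧ p 0 ≤ pmax ∧ ∀ k, 0 ≤ cp k (p 0) - cm k (p 0))
    (hstep : ∀ j : ℕ, p (j + 1) ∈ D (p j) ∧
      ∀ y ∈ D (p j), G (p j) y ≤ G (p j) (p (j + 1))) :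
    (∀ j : ℕ, 0 ≤ p j ∧ p j ≤ pmax ∧ ∀ k, 0 ≤ cp k (p j) - cm k (p j)) ∧
    Monotone (fun j => GEE (p j)) ∧
    ∃ L : ℝ, Filter.Tendsto (fun j => GEE (p j)) Filter.atTop (nhds L) := by
  have hDfeas : ∀ x y, y ∈ D x → 0 ≤ y ∧ y ≤ pmax ∧ ∀ k, 0 ≤ cp k y - cm k y := by
    rintro x y hy
    obtain ⟨hy0, hymax, hyc⟩ := hD x ▸ hy
    exact ⟨hy0, hymax, fun k => by linarith [hyc k, (hcmconc k).le_add_fderiv (hcmdiff k) x y]⟩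
  have feas : ∀ j, 0 ≤ p j ∧ p j ≤ pmax ∧ ∀ k, 0 ≤ cp k (p j) - cm k (p j) := by
    rintro (_ | j)
    exacts [hp0, hDfeas _ _ (hstep j).1]
  have hself : ∀ j, p j ∈ D (p j) := fun j => by
    simpa [hD] using feas j
  have htight : ∀ x, GEE x ≤ G x x := fun x => by simp [hG, hGEE]
  have hminor : ∀ x y, 0 ≤ y → G x y ≤ GEE y := fun x y hy => by
    rw [hG, hGEE]
    exact div_le_div_of_nonneg_right (sum_sub_linearization_le hqmconc hqmdiff x y)
      (sum_mul_add_pos hμ hy hΨsum).le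
  have hmono : Monotone (GEE ∘ p) := monotone_comp_of_minorize_maximize (fun _ => htight _)
    (fun j => hminor _ _ (feas (j + 1)).1) hself fun j => (hstep j).2
  have hcont : ContinuousOn GEE (Icc 0 pmax) := by
    rw [funext hGEE]
    have hqmc : ∀ k, Continuous (qm k) := fun k => (hqmdiff k).continuous
    exact ContinuousOn.div (by fun_prop) (by fun_prop) fun y hy =>
      (sum_mul_add_pos hμ hy.1 hΨsum).ne'
  exact ⟨feas, hmono, exists_tendsto_of_monotone_of_mem_compact hmono isCompact_Icc hcont
    fun j => ⟨(feas j).1, (feas j).2.1⟩⟩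

/-- Monotone-convergence content of Proposition 6 of the paper: the sequential
fractional programming iteration for global energy efficiency maximization stays
feasible, monotonically increases the GEE, and converges. -/
theorem gee_sequential_fractional_programming {K : ℕ} (hK : 1 ≤ K)
    (pmax : Fin K → ℝ) (hpmax : 0 ≤ pmax)
    (qp qm cp cm : Fin K → (Fin K → ℝ) → ℝ)
    (hqpc : ∀ k, Continuous (qp k))
    (hqmconc : ∀ k, ConcaveOn ℝ Set.univ (qm k))
    (hqmdiff : ∀ k, Differentiable ℝ (qm k))
    (hcmconc : ∀ k, ConcaveOn ℝ Set.univ (cm k))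
    (hcmdiff : ∀ k, Differentiable ℝ (cm k))
    (μ Ψ : Fin K → ℝ) (hμ : ∀ k, 0 ≤ μ k) (hΨ : ∀ k, 0 ≤ Ψ k)
    (hΨsum : 0 < ∑ k, Ψ k)
    (GEE : (Fin K → ℝ) → ℝ)
    (hGEE : ∀ p : Fin K → ℝ,
      GEE p = (∑ k, (qp k p - qm k p)) / (∑ k, (μ k * p k + Ψ k)))
    (D : (Fin K → ℝ) → Set (Fin K → ℝ))
    (hD : ∀ x : Fin K → ℝ, D x = {p : Fin K → ℝ | 0 ≤ p ∧ p ≤ pmax ∧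
      ∀ k, 0 ≤ cp k p - (cm k x + fderiv ℝ (cm k) x (p - x))})
    (G : (Fin K → ℝ) → (Fin K → ℝ) → ℝ)
    (hG : ∀ x p : Fin K → ℝ, G x p =
      (∑ k, (qp k p - (qm k x + fderiv ℝ (qm k) x (p - x)))) /
        (∑ k, (μ k * p k + Ψ k)))
    (p : ℕ → Fin K → ℝ)
    (hp0 : 0 ≤ p 0 ∧ p 0 ≤ pmax ∧ ∀ k, 0 ≤ cp k (p 0) - cm k (p 0))
    (hstep : ∀ j : ℕ, p (j + 1) ∈ D (p j) ∧
      ∀ y ∈ D (p j), G (p j) y ≤ G (p j) (p (j + 1))) :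
    (∀ j : ℕ, 0 ≤ p j ∧ p j ≤ pmax ∧ ∀ k, 0 ≤ cp k (p j) - cm k (p j)) ∧
    Monotone (fun j => GEE (p j)) ∧
    ∃ L : ℝ, Filter.Tendsto (fun j => GEE (p j)) Filter.atTop (nhds L) :=
  gee_sequential_fractional_programming_general pmax qp qm cp cm hqpc hqmconc hqmdiff hcmconc
    hcmdiff μ Ψ hμ hΨsum GEE hGEE D hD G hG p hp0 hstep
end

section
/- Let K ≥ 1, let p_max ∈ ℝ^K with p_max ≥ 0, and for each k ∈ Fin K let q_k⁺ : ℝ^K → ℝ be continuous, q_k⁻ : ℝ^K → ℝ be concave and differentiable, c_k⁺ : ℝ^K → ℝ be arbitrary, c_k⁻ : ℝ^K → ℝ be concave and differentiable, and let μ_k ≥ 0 and Ψ_k > 0. Define WMEE(p) = min_{k ∈ Fin K} (q_k⁺(p) − q_k⁻(p))/(μ_k p_k + Ψ_k). For each x ∈ ℝ^K define D(x) = {p : 0 ≤ p ≤ p_max and for all k, c_k⁺(p) − (c_k⁻(x) + Dc_k⁻(x)(p − x)) ≥ 0} and the approximate objective G_x(p) = min_{k ∈ Fin K} (q_k⁺(p)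 − (q_k⁻(x) + Dq_k⁻(x)(p − x)))/(μ_k p_k + Ψ_k), where Dh(x) denotes the Fréchet derivative of h at x. Let (p_j)_{j ≥ 0} be a sequence in ℝ^K with 0 ≤ p_0 ≤ p_max and c_k⁺(p_0) − c_k⁻(p_0) ≥ 0 for all k, and such that for every j, p_{j+1} ∈ D(p_j) and p_{j+1} maximizes G_{p_j} over D(p_j). Then every p_j is feasible for the original problem (0 ≤ p_j ≤ p_max and c_k⁺(p_j) − c_k⁻(p_j) ≥ 0 for all k), the sequence (WMEE(p_j))_j is monotone nondecreasing, and it converges to a finite limit. -/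
lemma finMin_mono {K : ℕ} (hK : 1 ≤ K) {f g : Fin K → ℝ} (h : ∀ k, f k ≤ g k) :
    finMin hK f ≤ finMin hK g :=
  Finset.le_inf' _ _ (fun b _ => (finMin_le hK f b).trans (h b))

/-- First-order upper bound for concave differentiable functions. -/
lemma concave_fderiv_le {K : ℕ} (f : (Fin K → ℝ) → ℝ) (hc : ConcaveOn ℝ Set.univ f)
    (hd : Differentiable ℝ f) (x y : Fin K → ℝ) :
    f y ≤ f x + fderiv ℝ f x (y - x) := by
  set v := y - x with hv
  set g : ℝ → ℝ := fun t => f (x + t • v) with hgdef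
  have hg : HasDerivAt g (fderiv ℝ f x v) 0 := by
    have h1 : HasDerivAt (fun t : ℝ => x + t • v) v 0 := by
      simpa using ((hasDerivAt_id (0 : ℝ)).smul_const v).const_add x
    have h2 : HasFDerivAt f (fderiv ℝ f x) ((fun t : ℝ => x + t • v) 0) := by
      simpa using (hd x).hasFDerivAt
    exact h2.comp_hasDerivAt 0 h1
  have key : ∀ t ∈ Set.Ioc (0 : ℝ) 1, f y - f x ≤ slope g 0 t := by
    intro t ht
    have hseg : x + t • v = (1 - t) • x + t • y := by
      rw [hv]; module
    have hcc := hc.2 (Set.mem_univ x) (Set.mem_univ y)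
      (by linarith [ht.2] : (0:ℝ) ≤ 1 - t) ht.1.le (by ring)
    have hgt : f x + t * (f y - f x) ≤ g t := by
      rw [hgdef]; simp only [hseg]
      calc f x + t * (f y - f x) = (1 - t) * f x + t * f y := by ring
        _ = (1 - t) • f x + t • f y := by simp [smul_eq_mul]
        _ ≤ _ := hcc
    have hg0 : g 0 = f x := by simp [hgdef]
    have hsl : slope g 0 t = (g t - f x) / t := by
      simp [slope_def_field, hg0]
    rw [hsl, le_div_iff₀ ht.1]
    nlinarith [hgt]
  have htend : Filter.Tendsto (slope g 0) (nhdsWithin 0 (Set.Ioi 0)) (nhds (fderiv ℝ f x v)) := by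
    have := hasDerivAt_iff_tendsto_slope.mp hg
    exact this.mono_left (nhdsWithin_mono 0 (fun t ht => ne_of_gt ht))
  have hev : ∀ᶠ t in nhdsWithin (0:ℝ) (Set.Ioi 0), f y - f x ≤ slope g 0 t := by
    filter_upwards [Ioc_mem_nhdsGT_of_mem (Set.left_mem_Ico.mpr one_pos)] using key
  have := ge_of_tendsto htend hev
  linarith

/-- Monotone-convergence content of Proposition 7 of the paper: the sequential
fractional programming iteration for weighted minimum energy efficiency
maximization stays feasible, monotonically increases the WMEE, and converges. -/
theorem wmee_sequential_fractional_programming {K : ℕ} (hK : 1 ≤ K)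
    (pmax : Fin K → ℝ) (hpmax : 0 ≤ pmax)
    (qp qm cp cm : Fin K → (Fin K → ℝ) → ℝ)
    (hqpc : ∀ k, Continuous (qp k))
    (hqmconc : ∀ k, ConcaveOn ℝ Set.univ (qm k))
    (hqmdiff : ∀ k, Differentiable ℝ (qm k))
    (hcmconc : ∀ k, ConcaveOn ℝ Set.univ (cm k))
    (hcmdiff : ∀ k, Differentiable ℝ (cm k))
    (μ Ψ : Fin K → ℝ) (hμ : ∀ k, 0 ≤ μ k) (hΨ : ∀ k, 0 < Ψ k)
    (WMEE : (Fin K → ℝ) → ℝ)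
    (hWMEE : ∀ p : Fin K → ℝ,
      WMEE p = finMin hK (fun k => (qp k p - qm k p) / (μ k * p k + Ψ k)))
    (D : (Fin K → ℝ) → Set (Fin K → ℝ))
    (hD : ∀ x : Fin K → ℝ, D x = {p : Fin K → ℝ | 0 ≤ p ∧ p ≤ pmax ∧
      ∀ k, 0 ≤ cp k p - (cm k x + fderiv ℝ (cm k) x (p - x))})
    (G : (Fin K → ℝ) → (Fin K → ℝ) → ℝ)
    (hG : ∀ x p : Fin K → ℝ, G x p = finMin hK (fun k =>
      (qp k p - (qm k x + fderiv ℝ (qm k) x (p - x))) / (μ k * p k + Ψ k)))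
    (p : ℕ → Fin K → ℝ)
    (hp0 : 0 ≤ p 0 ∧ p 0 ≤ pmax ∧ ∀ k, 0 ≤ cp k (p 0) - cm k (p 0))
    (hstep : ∀ j : ℕ, p (j + 1) ∈ D (p j) ∧
      ∀ y ∈ D (p j), G (p j) y ≤ G (p j) (p (j + 1))) :
    (∀ j : ℕ, 0 ≤ p j ∧ p j ≤ pmax ∧ ∀ k, 0 ≤ cp k (p j) - cm k (p j)) ∧
    Monotone (fun j => WMEE (p j)) ∧
    ∃ L : ℝ, Filter.Tendsto (fun j => WMEE (p j)) Filter.atTop (nhds L) := by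
  have feas : ∀ j : ℕ, 0 ≤ p j ∧ p j ≤ pmax ∧ ∀ k, 0 ≤ cp k (p j) - cm k (p j) := by
    intro j
    induction j with
    | zero => exact hp0
    | succ n _ =>
      have hmem := (hstep n).1
      rw [hD] at hmem
      obtain ⟨h1, h2, h3⟩ := hmem
      refine ⟨h1, h2, fun k => ?_⟩
      have hgrad := concave_fderiv_le (cm k) (hcmconc k) (hcmdiff k) (p n) (p (n + 1))
      have := h3 k
      linarith
  have hden : ∀ (x : Fin K → ℝ), 0 ≤ x → ∀ k, 0 < μ k * x k + Ψ k := by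
    intro x hx k
    have : 0 ≤ μ k * x k := mul_nonneg (hμ k) (hx k)
    linarith [hΨ k]
  have hself : ∀ j : ℕ, p j ∈ D (p j) := by
    intro j
    rw [hD]
    refine ⟨(feas j).1, (feas j).2.1, fun k => ?_⟩
    simpa [sub_self] using (feas j).2.2 k
  have hGxx : ∀ j : ℕ, G (p j) (p j) = WMEE (p j) := by
    intro j
    rw [hG, hWMEE]
    congr 1
    funext k
    simp [sub_self]
  have hGle : ∀ (x y : Fin K → ℝ), 0 ≤ y → G x y ≤ WMEE y := by
    intro x y hy
    rw [hG, hWMEE]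
    apply finMin_mono
    intro k
    apply (div_le_div_iff_of_pos_right (hden y hy k)).mpr
    have := concave_fderiv_le (qm k) (hqmconc k) (hqmdiff k) x y
    linarith
  have hmono : Monotone (fun j => WMEE (p j)) := by
    apply monotone_nat_of_le_succ
    intro j
    have h2 : G (p j) (p j) ≤ G (p j) (p (j + 1)) := (hstep j).2 _ (hself j)
    have h3 : G (p j) (p (j + 1)) ≤ WMEE (p (j + 1)) :=
      hGle (p j) (p (j + 1)) (feas (j + 1)).1
    calc WMEE (p j) = G (p j) (p j) := (hGxx j).symm
      _ ≤ G (p j) (p (j + 1)) := h2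
      _ ≤ WMEE (p (j + 1)) := h3
  have k0 : Fin K := ⟨0, hK⟩
  set S : Set (Fin K → ℝ) := Set.Icc 0 pmax with hS
  have hScomp : IsCompact S := isCompact_Icc
  have hSne : S.Nonempty := ⟨0, le_refl _, hpmax⟩
  set f : (Fin K → ℝ) → ℝ := fun x => (qp k0 x - qm k0 x) / (μ k0 * x k0 + Ψ k0) with hf
  have hfc : ContinuousOn f S := by
    apply ContinuousOn.div
    · exact ((hqpc k0).sub (hqmdiff k0).continuous).continuousOn
    · exact ((continuous_const.mul (continuous_apply k0)).add continuous_const).continuousOn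
    · intro x hx
      exact ne_of_gt (hden x hx.1 k0)
  obtain ⟨B, _, hB⟩ := hScomp.exists_isMaxOn hSne hfc
  have hbound : ∀ j : ℕ, WMEE (p j) ≤ f B := by
    intro j
    have h1 : WMEE (p j) ≤ f (p j) := by
      rw [hWMEE]
      exact finMin_le hK _ k0
    exact h1.trans (hB ⟨(feas j).1, (feas j).2.1⟩)
  refine ⟨feas, hmono, ⟨⨆ j, WMEE (p j), tendsto_atTop_ciSup hmono ?_⟩⟩
  exact ⟨f B, by rintro _ ⟨j, rfl⟩; exact hbound j⟩
end
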